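/- arXiv:2002.08686 — 3 statements merged into one kernel-verified Lean document; each statement's English description precedes it below -/
import Mathlib

section
/- Let n ≥ 4 and 1 ≤ i < j ≤ n. Then: (1) if i ≥ 3, then S_0(R_{i−1,j−1,n}) = R_{i,j,n+1} as subsets of F_{n+1}; (2) if j − i ≥ 3, then S_i(R_{i,j−1,n}) = R_{i,j,n+1}; (3) if (n+1) − j ≥ 3, then S_j(R_{i,j,n}) = R_{i,j,n+1}. In particular, if at least one of the conditions i ≥ 3, j − i ≥ 3, (n+1) − j ≥ 3 holds, then there exists k with 1 ≤ k ≤ n such that the image under S_{k−1} of a long-relator set R_{i',j',k'} with i' < j' < k' ≤ n equals R_{i,j,n+1}. -/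
/-- The ambient free group with generators `λ i j` indexed by ordered pairs of naturals;
the sub-free-group `F_m` is spanned by the generators `lam i j` with `1 ≤ i ≠ j ≤ m`,
and the canonical inclusion `F_m → F_{m'}` is the identity on generators. -/
abbrev FG : Type := FreeGroup (ℕ × ℕ)

/-- The generator `λ_{i,j}`. -/
def lam (i j : ℕ) : FG := FreeGroup.of (i, j)

/-- The commutativity relators `λ_{i,j} λ_{k,l} λ_{i,j}⁻¹ λ_{k,l}⁻¹` of `VP_m`,
for pairwise distinct indices `1 ≤ i, j, k, l ≤ m`. -/
def CR (m : ℕ) : Set FG :=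
  {w | ∃ i j k l : ℕ,
    1 ≤ i ∧ i ≤ m ∧ 1 ≤ j ∧ j ≤ m ∧ 1 ≤ k ∧ k ≤ m ∧ 1 ≤ l ∧ l ≤ m ∧
    i ≠ j ∧ i ≠ k ∧ i ≠ l ∧ j ≠ k ∧ j ≠ l ∧ k ≠ l ∧
    w = lam i j * lam k l * (lam i j)⁻¹ * (lam k l)⁻¹}

/-- The long relators `λ_{k,i} λ_{k,j} λ_{i,j} λ_{k,i}⁻¹ λ_{k,j}⁻¹ λ_{i,j}⁻¹` of `VP_m`,
for pairwise distinct indices `1 ≤ i, j, k ≤ m`. -/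
def LongR (m : ℕ) : Set FG :=
  {w | ∃ i j k : ℕ,
    1 ≤ i ∧ i ≤ m ∧ 1 ≤ j ∧ j ≤ m ∧ 1 ≤ k ∧ k ≤ m ∧
    i ≠ j ∧ i ≠ k ∧ j ≠ k ∧
    w = lam k i * lam k j * lam i j * (lam k i)⁻¹ * (lam k j)⁻¹ * (lam i j)⁻¹}

/-- The full relator set `R^V(m)` of the virtual pure braid group `VP_m`. -/
def RV (m : ℕ) : Set FG := CR m ∪ LongR m

/-- Value of `S_{i-1}` on a generator, given by the displayed case formulas:
for `k < l`, `S_{i-1}(λ_{k,l})` and `S_{i-1}(λ_{l,k})` according to the position of `i`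
relative to `k` and `l`. -/
def Sgen (i : ℕ) (p : ℕ × ℕ) : FG :=
  if p.1 < p.2 then
    -- the generator is `λ_{k,l}` with `k = p.1 < l = p.2`
    if i < p.1 then lam (p.1 + 1) (p.2 + 1)
    else if i = p.1 then lam p.1 (p.2 + 1) * lam (p.1 + 1) (p.2 + 1)
    else if i < p.2 then lam p.1 (p.2 + 1)
    else if i = p.2 then lam p.1 (p.2 + 1) * lam p.1 p.2
    else lam p.1 p.2
  else if p.2 < p.1 then
    -- the generator is `λ_{l,k}` with `k = p.2 < l = p.1`
    if i < p.2 then lam (p.1 + 1) (p.2 + 1)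
    else if i = p.2 then lam (p.1 + 1) (p.2 + 1) * lam (p.1 + 1) p.2
    else if i < p.1 then lam (p.1 + 1) p.2
    else if i = p.1 then lam p.1 p.2 * lam (p.1 + 1) p.2
    else lam p.1 p.2
  else lam p.1 p.2

/-- The free-group homomorphism `S_t = S_{(t+1)-1} : F_m → F_{m+1}` (doubling the
`(t+1)`-st strand), determined on generators by the displayed case formulas. -/
def Smap (t : ℕ) : FG →* FG := FreeGroup.lift (Sgen (t + 1))

/-- The relator `u * v⁻¹` of a relation `u = v`. -/
def relOf (u v : FG) : FG := u * v⁻¹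

/-- The set `R_{i,j,k}` of the six long relators with indices in `{i, j, k}`. -/
def Rtriple (i j k : ℕ) : Set FG :=
  {relOf (lam i j * lam i k * lam j k) (lam j k * lam i k * lam i j),
   relOf (lam j i * lam j k * lam i k) (lam i k * lam j k * lam j i),
   relOf (lam i k * lam i j * lam k j) (lam k j * lam i j * lam i k),
   relOf (lam k i * lam k j * lam i j) (lam i j * lam k j * lam k i),
   relOf (lam j k * lam j i * lam k i) (lam k i * lam j i * lam j k),
   relOf (lam k j * lam k i * lam j i) (lam j i * lam k i * lam k j)}

/-- The commutator `[a,b] = a⁻¹ b⁻¹ a b`. -/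
def commE (a b : FG) : FG := a⁻¹ * b⁻¹ * a * b

/-- The automorphism of the free group induced by a permutation of the indices:
`λ_{i,j} ↦ λ_{σ(i),σ(j)}`. -/
def permF (σ : Equiv.Perm ℕ) : FG →* FG :=
  FreeGroup.lift (fun p => lam (σ p.1) (σ p.2))

/-!
Away from the doubled strand `t + 1`, the map `S_t` only relabels generators: it sends
`λ_{a,b}` to `λ_{s(a),s(b)}`, where `s` fixes the indices below `t + 1` and shifts those
above it by one. So `S_t` maps `R_{a,b,c}` onto `R_{s(a),s(b),s(c)}` whenever
`t + 1 ∉ {a, b, c}`. The three cases take `t = 0, i, j`; the hypotheses `≥ 3` ensure that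
`t + 1` is not among the source indices.
-/

def succAboveNat (i x : ℕ) : ℕ := if x < i then x else x + 1

lemma Sgen_of_ne {i a b : ℕ} (hab : a ≠ b) (ha : a ≠ i) (hb : b ≠ i) :
    Sgen i (a, b) = lam (succAboveNat i a) (succAboveNat i b) := by
  unfold Sgen succAboveNat
  split_ifs <;> first | rfl | omega

lemma Smap_lam_of_ne {t a b : ℕ} (hab : a ≠ b) (ha : a ≠ t + 1) (hb : b ≠ t + 1) :
    Smap t (lam a b) = lam (succAboveNat (t + 1) a) (succAboveNat (t + 1) b) :=
  (FreeGroup.lift_apply_of).trans (Sgen_of_ne hab ha hb)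

lemma MonoidHom.image_Rtriple (φ : FG →* FG) (f : ℕ → ℕ) {a b c : ℕ}
    (hφ : ∀ x ∈ ({a, b, c} : Set ℕ), ∀ y ∈ ({a, b, c} : Set ℕ), x ≠ y →
      φ (lam x y) = lam (f x) (f y))
    (hab : a ≠ b) (hac : a ≠ c) (hbc : b ≠ c) :
    φ '' Rtriple a b c = Rtriple (f a) (f b) (f c) := by
  simp only [Rtriple, Set.image_insert_eq, Set.image_singleton, relOf, map_mul, map_inv,
    hφ a (by simp) b (by simp) hab, hφ b (by simp) a (by simp) hab.symm,
    hφ a (by simp) c (by simp) hac, hφ c (by simp) a (by simp) hac.symm,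
    hφ b (by simp) c (by simp) hbc, hφ c (by simp) b (by simp) hbc.symm]

lemma Smap_image_Rtriple {t a b c : ℕ} (hab : a ≠ b) (hac : a ≠ c) (hbc : b ≠ c)
    (ha : a ≠ t + 1) (hb : b ≠ t + 1) (hc : c ≠ t + 1) :
    Smap t '' Rtriple a b c =
      Rtriple (succAboveNat (t + 1) a) (succAboveNat (t + 1) b) (succAboveNat (t + 1) c) := by
  refine (Smap t).image_Rtriple _ (fun x hx y hy hxy ↦ Smap_lam_of_ne hxy ?_ ?_) hab hac hbc
  · rcases hx with rfl | rfl | rfl <;> assumption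
  · rcases hy with rfl | rfl | rfl <;> assumption

theorem R_triple_lifting_cases_general (n i j : ℕ) (hij : i < j) (hj : j ≤ n) :
    (3 ≤ i → (Smap 0) '' (Rtriple (i - 1) (j - 1) n) = Rtriple i j (n + 1)) ∧
    (3 ≤ j - i → (Smap i) '' (Rtriple i (j - 1) n) = Rtriple i j (n + 1)) ∧
    (3 ≤ (n + 1) - j → (Smap j) '' (Rtriple i j n) = Rtriple i j (n + 1)) ∧
    ((3 ≤ i ∨ 3 ≤ j - i ∨ 3 ≤ (n + 1) - j) →
      ∃ k, 1 ≤ k ∧ k ≤ n ∧ ∃ i' j' k', i' < j' ∧ j' < k' ∧ k' ≤ n ∧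
        (Smap (k - 1)) '' (Rtriple i' j' k') = Rtriple i j (n + 1)) := by
  have case1 (h : 3 ≤ i) : Smap 0 '' Rtriple (i - 1) (j - 1) n = Rtriple i j (n + 1) := by
    rw [Smap_image_Rtriple (by omega) (by omega) (by omega) (by omega) (by omega)
      (by omega)]
    congr 1 <;> simp only [succAboveNat] <;> split_ifs <;> omega
  have case2 (h : 3 ≤ j - i) : Smap i '' Rtriple i (j - 1) n = Rtriple i j (n + 1) := by
    rw [Smap_image_Rtriple (by omega) (by omega) (by omega) (by omega) (by omega)
      (by omega)]
    congr 1 <;> simp only [succAboveNat] <;> split_ifs <;> omega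
  have case3 (h : 3 ≤ n + 1 - j) : Smap j '' Rtriple i j n = Rtriple i j (n + 1) := by
    rw [Smap_image_Rtriple (by omega) (by omega) (by omega) (by omega) (by omega)
      (by omega)]
    congr 1 <;> simp only [succAboveNat] <;> split_ifs <;> omega
  refine ⟨case1, case2, case3, ?_⟩
  rintro (h | h | h)
  · exact ⟨1, le_rfl, by omega, i - 1, j - 1, n, by omega, by omega, le_rfl, case1 h⟩
  · exact ⟨i + 1, by omega, by omega, i, j - 1, n, by omega, by omega, le_rfl, case2 h⟩
  · exact ⟨j + 1, by omega, by omega, i, j, n, hij, by omega, le_rfl, case3 h⟩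

/-- if `i ≥ 3` then `S_0(R_{i-1,j-1,n}) = R_{i,j,n+1}`;
if `j - i ≥ 3` then `S_i(R_{i,j-1,n}) = R_{i,j,n+1}`; if `(n+1) - j ≥ 3` then
`S_j(R_{i,j,n}) = R_{i,j,n+1}`; in particular, if one of these conditions holds,
there is `1 ≤ k ≤ n` such that the image under `S_{k-1}` of some long-relator set
`R_{i',j',k'}` with `i' < j' < k' ≤ n` equals `R_{i,j,n+1}`. -/
theorem R_triple_lifting_cases (n i j : ℕ) (hn : 4 ≤ n) (hi : 1 ≤ i) (hij : i < j)
    (hj : j ≤ n) :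
    (3 ≤ i → (Smap 0) '' (Rtriple (i - 1) (j - 1) n) = Rtriple i j (n + 1)) ∧
    (3 ≤ j - i → (Smap i) '' (Rtriple i (j - 1) n) = Rtriple i j (n + 1)) ∧
    (3 ≤ (n + 1) - j → (Smap j) '' (Rtriple i j n) = Rtriple i j (n + 1)) ∧
    ((3 ≤ i ∨ 3 ≤ j - i ∨ 3 ≤ (n + 1) - j) →
      ∃ k, 1 ≤ k ∧ k ≤ n ∧ ∃ i' j' k', i' < j' ∧ j' < k' ∧ k' ≤ n ∧
        (Smap (k - 1)) '' (Rtriple i' j' k') = Rtriple i j (n + 1)) :=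
  R_triple_lifting_cases_general n i j hij hj
end

section
/- Let n ≥ 4 and 2 < j ≤ n. Then every relator of the long-relation set R_{2,j,n+1} lies in the normal closure, in F_{n+1}, of the set S_0(R_{1,j−1,n}) ∪ R_{1,j,n+1} ∪ CR(n+1), where S_0 : F_n → F_{n+1}. -/
/-!
Doubling the first strand, `S₀` turns each long relation of `R_{1,j-1,n}` into the same
relation with `λ_{1,l}` replaced by `λ_{1,l+1} λ_{2,l+1}` and `λ_{l,1}` by
`λ_{l+1,2} λ_{l+1,1}`. Modulo the commutativity relators the strand-1 factors can be moved
next to each other, where they form the corresponding relation of `R_{1,j,n+1}`; cancelling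
it leaves the relation of `R_{2,j,n+1}`.
-/

section LongRelations

variable {G : Type*} [Group G] {a₁ a₂ b₁ b₂ c : G}

theorem longRel_cancel_left (hB : a₁ * a₂ * (b₁ * b₂) * c = c * (b₁ * b₂) * (a₁ * a₂))
    (hA : a₁ * b₁ * c = c * b₁ * a₁) (h₁ : Commute a₁ b₂) (h₂ : Commute a₂ b₁) :
    a₂ * b₂ * c = c * b₂ * a₂ := by
  apply mul_left_cancel (a := a₁ * b₁)
  calc a₁ * b₁ * (a₂ * b₂ * c) = a₁ * a₂ * (b₁ * b₂) * c := by
        simp only [mul_assoc, h₂.left_comm]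
    _ = c * (b₁ * b₂) * (a₁ * a₂) := hB
    _ = c * b₁ * a₁ * (b₂ * a₂) := by simp only [mul_assoc, h₁.left_comm]
    _ = a₁ * b₁ * (c * b₂ * a₂) := by rw [← hA]; simp only [mul_assoc]

theorem longRel_cancel_outer (hB : a₂ * a₁ * c * (b₁ * b₂) = b₁ * b₂ * c * (a₂ * a₁))
    (hA : a₁ * c * b₁ = b₁ * c * a₁) (h₁ : Commute a₁ b₂) (h₂ : Commute a₂ b₁) :
    a₂ * c * b₂ = b₂ * c * a₂ := by
  apply mul_left_cancel (a := b₁)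
  apply mul_right_cancel (b := a₁)
  calc b₁ * (a₂ * c * b₂) * a₁ = a₂ * (a₁ * c * b₁) * b₂ := by
        rw [hA]; simp only [mul_assoc, h₂.left_comm, h₁.eq]
    _ = a₂ * a₁ * c * (b₁ * b₂) := by simp only [mul_assoc]
    _ = b₁ * b₂ * c * (a₂ * a₁) := hB
    _ = b₁ * (b₂ * c * a₂) * a₁ := by simp only [mul_assoc]

theorem longRel_cancel_right (hB : c * (a₂ * a₁) * (b₂ * b₁) = b₂ * b₁ * (a₂ * a₁) * c)
    (hA : c * a₁ * b₁ = b₁ * a₁ * c) (h₁ : Commute a₁ b₂) (h₂ : Commute a₂ b₁) :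
    c * a₂ * b₂ = b₂ * a₂ * c := by
  apply mul_right_cancel (b := a₁ * b₁)
  calc c * a₂ * b₂ * (a₁ * b₁) = c * (a₂ * a₁) * (b₂ * b₁) := by
        simp only [mul_assoc, h₁.left_comm]
    _ = b₂ * b₁ * (a₂ * a₁) * c := hB
    _ = b₂ * a₂ * (b₁ * a₁ * c) := by simp only [mul_assoc, h₂.left_comm]
    _ = b₂ * a₂ * c * (a₁ * b₁) := by rw [← hA]; simp only [mul_assoc]

end LongRelations

theorem Smap_lam_of_succ_lt {t k l : ℕ} (hk : t + 1 < k) (hl : t + 1 < l) (hkl : k ≠ l) :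
    Smap t (lam k l) = lam (k + 1) (l + 1) := by
  rcases lt_or_gt_of_ne hkl with h | h <;>
    simp [Smap, lam, Sgen, h, hk, hl, h.not_gt]

theorem Smap_lam_succ_left {t l : ℕ} (hl : t + 1 < l) :
    Smap t (lam (t + 1) l) = lam (t + 1) (l + 1) * lam (t + 2) (l + 1) := by
  simp [Smap, lam, Sgen, hl]

theorem Smap_lam_succ_right {t l : ℕ} (hl : t + 1 < l) :
    Smap t (lam l (t + 1)) = lam (l + 1) (t + 2) * lam (l + 1) (t + 1) := by
  simp [Smap, lam, Sgen, hl, hl.not_gt]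

section Relators

variable {G : Type*} [Group G] (f : FG →* G)

theorem map_Rtriple_eq_one_iff (i j k : ℕ) :
    (∀ w ∈ Rtriple i j k, f w = 1) ↔
      f (lam i j) * f (lam i k) * f (lam j k) = f (lam j k) * f (lam i k) * f (lam i j) ∧
      f (lam j i) * f (lam j k) * f (lam i k) = f (lam i k) * f (lam j k) * f (lam j i) ∧
      f (lam i k) * f (lam i j) * f (lam k j) = f (lam k j) * f (lam i j) * f (lam i k) ∧
      f (lam k i) * f (lam k j) * f (lam i j) = f (lam i j) * f (lam k j) * f (lam k i) ∧
      f (lam j k) * f (lam j i) * f (lam k i) = f (lam k i) * f (lam j i) * f (lam j k) ∧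
      f (lam k j) * f (lam k i) * f (lam j i) = f (lam j i) * f (lam k i) * f (lam k j) := by
  simp only [Rtriple, Set.mem_insert_iff, Set.mem_singleton_iff, forall_eq_or_imp, forall_eq,
    relOf, map_mul, map_inv, mul_inv_eq_one]

theorem map_lam_commute_of_CR {m : ℕ} (hC : ∀ w ∈ CR m, f w = 1) {a b c d : ℕ}
    (h : 1 ≤ a ∧ a ≤ m ∧ 1 ≤ b ∧ b ≤ m ∧ 1 ≤ c ∧ c ≤ m ∧ 1 ≤ d ∧ d ≤ m ∧
      a ≠ b ∧ a ≠ c ∧ a ≠ d ∧ b ≠ c ∧ b ≠ d ∧ c ≠ d) :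
    Commute (f (lam a b)) (f (lam c d)) := by
  rw [← commutatorElement_eq_one_iff_commute, commutatorElement_def]
  simpa using hC (lam a b * lam c d * (lam a b)⁻¹ * (lam c d)⁻¹) ⟨a, b, c, d, by simp [h]⟩

theorem map_Rtriple_two_eq_one {m n : ℕ} (hm : 1 < m) (hmn : m < n)
    (hA : ∀ w ∈ Rtriple 1 (m + 1) (n + 1), f w = 1)
    (hB : ∀ w ∈ Rtriple 1 m n, f (Smap 0 w) = 1)
    (hC : ∀ w ∈ CR (n + 1), f w = 1) :
    ∀ w ∈ Rtriple 2 (m + 1) (n + 1), f w = 1 := by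
  have S₁ : Smap 0 (lam 1 m) = lam 1 (m + 1) * lam 2 (m + 1) := Smap_lam_succ_left hm
  have S₂ : Smap 0 (lam m 1) = lam (m + 1) 2 * lam (m + 1) 1 := Smap_lam_succ_right hm
  have S₃ : Smap 0 (lam 1 n) = lam 1 (n + 1) * lam 2 (n + 1) := Smap_lam_succ_left (by omega)
  have S₄ : Smap 0 (lam n 1) = lam (n + 1) 2 * lam (n + 1) 1 := Smap_lam_succ_right (by omega)
  have S₅ : Smap 0 (lam m n) = lam (m + 1) (n + 1) := Smap_lam_of_succ_lt hm (by omega) hmn.ne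
  have S₆ : Smap 0 (lam n m) = lam (n + 1) (m + 1) := Smap_lam_of_succ_lt (by omega) hm hmn.ne'
  obtain ⟨A₁, A₂, A₃, A₄, A₅, A₆⟩ := (map_Rtriple_eq_one_iff f _ _ _).1 hA
  obtain ⟨B₁, B₂, B₃, B₄, B₅, B₆⟩ := (map_Rtriple_eq_one_iff (f.comp (Smap 0)) _ _ _).1 hB
  simp only [MonoidHom.comp_apply, S₁, S₂, S₃, S₄, S₅, S₆, map_mul] at B₁ B₂ B₃ B₄ B₅ B₆
  have comm {a b c d : ℕ} := map_lam_commute_of_CR f hC (a := a) (b := b) (c := c) (d := d)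
  exact (map_Rtriple_eq_one_iff f _ _ _).2
    ⟨longRel_cancel_left B₁ A₁ (comm (by omega)) (comm (by omega)),
      longRel_cancel_outer B₂ A₂ (comm (by omega)) (comm (by omega)),
      longRel_cancel_left B₃ A₃ (comm (by omega)) (comm (by omega)),
      longRel_cancel_outer B₄ A₄ (comm (by omega)) (comm (by omega)),
      longRel_cancel_right B₅ A₅ (comm (by omega)) (comm (by omega)),
      longRel_cancel_right B₆ A₆ (comm (by omega)) (comm (by omega))⟩

end Relators

theorem R_2_j_lift_general (n j : ℕ) (hj2 : 2 < j) (hj : j ≤ n) :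
    Rtriple 2 j (n + 1) ⊆
      (Subgroup.normalClosure
        ((Smap 0) '' (Rtriple 1 (j - 1) n) ∪ Rtriple 1 j (n + 1) ∪ CR (n + 1))
        : Set FG) := by
  obtain ⟨m, rfl⟩ : ∃ m, j = m + 1 := ⟨j - 1, by omega⟩
  rw [Nat.add_sub_cancel]
  set S := (Smap 0) '' (Rtriple 1 m n) ∪ Rtriple 1 (m + 1) (n + 1) ∪ CR (n + 1)
  have mk_eq_one {w : FG} (hw : w ∈ S) : QuotientGroup.mk' (Subgroup.normalClosure S) w = 1 :=
    (QuotientGroup.eq_one_iff w).2 (Subgroup.subset_normalClosure hw)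
  intro w hw
  rw [SetLike.mem_coe, ← QuotientGroup.eq_one_iff]
  exact map_Rtriple_two_eq_one _ (by omega) (by omega)
    (fun w hw => mk_eq_one (.inl (.inr hw))) (fun w hw => mk_eq_one (.inl (.inl ⟨w, hw, rfl⟩)))
    (fun w hw => mk_eq_one (.inr hw)) w hw

/-- for `n ≥ 4` and `2 < j ≤ n`, every relator of `R_{2,j,n+1}` lies in
the normal closure in `F_{n+1}` of `S_0(R_{1,j-1,n}) ∪ R_{1,j,n+1} ∪ CR(n+1)`. -/
theorem R_2_j_lift (n j : ℕ) (hn : 4 ≤ n) (hj2 : 2 < j) (hj : j ≤ n) :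
    Rtriple 2 j (n + 1) ⊆
      (Subgroup.normalClosure
        ((Smap 0) '' (Rtriple 1 (j - 1) n) ∪ Rtriple 1 j (n + 1) ∪ CR (n + 1))
        : Set FG) :=
  R_2_j_lift_general n j hj2 hj
end

section
/- In the free group F_4, the relator set R^V(4) decomposes as the disjoint union R^V(4) = R^V(3) ⊔ π_1·R^V(3) ⊔ π_2·R^V(3) ⊔ π_3·R^V(3) ⊔ CR(4), where π_1 = τ_3, π_2 = τ_2∘τ_3, π_3 = τ_1∘τ_2∘τ_3 are permutations of {1,2,3,4} built from the transpositions τ_k = (k, k+1), each permutation σ acts on F_4 via the automorphism sending λ_{i,j} to λ_{σ(i),σ(j)}, and R^V(3) ⊆ F_4 via the canonical inclusion F_3 → F_4. -/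
/-!
The long relators on an index set `{a, b, c}` form a block of six, and the automorphism
induced by a permutation `σ` carries the block on `{a, b, c}` onto the block on
`{σ a, σ b, σ c}`. Since `CR(3) = ∅`, `R^V(3)` is the block on `{1, 2, 3}`, and `π₁, π₂, π₃`
move it to the blocks on `{1, 2, 4}`, `{1, 3, 4}`, `{2, 3, 4}`; these four blocks exhaust the
long relators of `R^V(4)`. All five sets are finite sets of free group elements, which are
compared through their reduced words, so disjointness is a finite check.
-/

def longRel (i j k : ℕ) : FG :=
  lam k i * lam k j * lam i j * (lam k i)⁻¹ * (lam k j)⁻¹ * (lam i j)⁻¹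

def commRel (i j k l : ℕ) : FG := lam i j * lam k l * (lam i j)⁻¹ * (lam k l)⁻¹

def longRelsOn (a b c : ℕ) : Finset FG :=
  {longRel a b c, longRel a c b, longRel b a c, longRel b c a, longRel c a b, longRel c b a}

def distinctTriples (m : ℕ) : Finset (ℕ × ℕ × ℕ) :=
  {t ∈ Finset.Icc 1 m ×ˢ Finset.Icc 1 m ×ˢ Finset.Icc 1 m |
    t.1 ≠ t.2.1 ∧ t.1 ≠ t.2.2 ∧ t.2.1 ≠ t.2.2}

def distinctQuadruples (m : ℕ) : Finset (ℕ × ℕ × ℕ × ℕ) :=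
  {q ∈ Finset.Icc 1 m ×ˢ Finset.Icc 1 m ×ˢ Finset.Icc 1 m ×ˢ Finset.Icc 1 m |
    q.1 ≠ q.2.1 ∧ q.1 ≠ q.2.2.1 ∧ q.1 ≠ q.2.2.2 ∧ q.2.1 ≠ q.2.2.1 ∧ q.2.1 ≠ q.2.2.2 ∧
      q.2.2.1 ≠ q.2.2.2}

theorem LongR_eq_image (m : ℕ) :
    LongR m = ((distinctTriples m).image fun t => longRel t.1 t.2.1 t.2.2 : Set FG) := by
  ext w
  simp [LongR, distinctTriples, longRel, and_assoc, eq_comm]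

theorem CR_eq_image (m : ℕ) :
    CR m =
      ((distinctQuadruples m).image fun q => commRel q.1 q.2.1 q.2.2.1 q.2.2.2 : Set FG) := by
  ext w
  simp [CR, distinctQuadruples, commRel, and_assoc, eq_comm]

theorem CR_three : CR 3 = ∅ := by
  rw [CR_eq_image, Finset.coe_eq_empty]; decide

theorem RV_three : RV 3 = longRelsOn 1 2 3 := by
  rw [RV, CR_three, Set.empty_union, LongR_eq_image, Finset.coe_inj]; decide

theorem LongR_four :
    LongR 4 = ↑(longRelsOn 1 2 3 ∪ longRelsOn 1 2 4 ∪ longRelsOn 1 3 4 ∪ longRelsOn 2 3 4) := by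
  rw [LongR_eq_image, Finset.coe_inj]; decide

theorem permF_lam (σ : Equiv.Perm ℕ) (i j : ℕ) : permF σ (lam i j) = lam (σ i) (σ j) :=
  FreeGroup.lift_apply_of ..

theorem permF_longRel (σ : Equiv.Perm ℕ) (i j k : ℕ) :
    permF σ (longRel i j k) = longRel (σ i) (σ j) (σ k) := by
  simp only [longRel, map_mul, map_inv, permF_lam]

theorem image_permF_longRelsOn (σ : Equiv.Perm ℕ) (a b c : ℕ) :
    permF σ '' longRelsOn a b c = longRelsOn (σ a) (σ b) (σ c) := by
  simp only [longRelsOn, Finset.coe_insert, Finset.coe_singleton, Set.image_insert_eq,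
    Set.image_singleton, permF_longRel]

theorem image_permF_RV_three (σ : Equiv.Perm ℕ) :
    permF σ '' RV 3 = longRelsOn (σ 1) (σ 2) (σ 3) := by
  rw [RV_three, image_permF_longRelsOn]

/-- with `τ_k = (k,k+1)`, `π₁ = τ₃`, `π₂ = τ₂∘τ₃`, `π₃ = τ₁∘τ₂∘τ₃`
(acting on `F_4` by `λ_{i,j} ↦ λ_{σ(i),σ(j)}`), the relator set `R^V(4)` is the
disjoint union `R^V(3) ⊔ π₁·R^V(3) ⊔ π₂·R^V(3) ⊔ π₃·R^V(3) ⊔ CR(4)`. -/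
theorem RV4_decomposition :
    RV 4 = RV 3 ∪ (permF (Equiv.swap 3 4)) '' (RV 3)
        ∪ (permF (Equiv.swap 2 3 * Equiv.swap 3 4)) '' (RV 3)
        ∪ (permF (Equiv.swap 1 2 * Equiv.swap 2 3 * Equiv.swap 3 4)) '' (RV 3)
        ∪ CR 4 ∧
    List.Pairwise Disjoint
      ([RV 3, (permF (Equiv.swap 3 4)) '' (RV 3),
        (permF (Equiv.swap 2 3 * Equiv.swap 3 4)) '' (RV 3),
        (permF (Equiv.swap 1 2 * Equiv.swap 2 3 * Equiv.swap 3 4)) '' (RV 3),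
        CR 4] : List (Set FG)) := by
  have hπ₁ : permF (Equiv.swap 3 4) '' RV 3 = longRelsOn 1 2 4 := image_permF_RV_three _
  have hπ₂ : permF (Equiv.swap 2 3 * Equiv.swap 3 4) '' RV 3 = longRelsOn 1 3 4 :=
    image_permF_RV_three _
  have hπ₃ : permF (Equiv.swap 1 2 * Equiv.swap 2 3 * Equiv.swap 3 4) '' RV 3 =
      longRelsOn 2 3 4 :=
    image_permF_RV_three _
  rw [hπ₁, hπ₂, hπ₃, RV_three]
  constructor
  · rw [RV, LongR_four, Finset.coe_union, Finset.coe_union, Finset.coe_union]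
    exact Set.union_comm _ _
  · have hdisj : List.Pairwise Disjoint [longRelsOn 1 2 3, longRelsOn 1 2 4, longRelsOn 1 3 4,
        longRelsOn 2 3 4,
        (distinctQuadruples 4).image fun q => commRel q.1 q.2.1 q.2.2.1 q.2.2.2] := by
      decide
    rw [CR_eq_image]
    simpa using hdisj.map (f := ((↑) : Finset FG → Set FG)) fun _ _ => Finset.disjoint_coe.mpr
end
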